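/- arXiv:2504.06433 — 3 statements merged into one kernel-verified Lean document; each statement's English description precedes it below -/
import Mathlib

section
/- Let f be a polynomial in n variables over ℂ. If there exists a justifying assignment a ∈ ℂ^n for f such that f(a) = 0, then f is indecomposable. -/
/-- The univariate polynomial obtained from `f` by substituting `a j` for the
variable `x j` for every `j ≠ i`, keeping `x i` as the variable. -/
noncomputable def substPoly {n : ℕ} (f : MvPolynomial (Fin n) ℂ) (a : Fin n → ℂ) (i : Fin n) :
    Polynomial ℂ :=
  MvPolynomial.eval₂ Polynomial.C (fun j => if j = i then Polynomial.X else Polynomial.C (a j)) f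

/-- `f` depends on the variable `x i`: there is a point `a` such that substituting `a j`
for all `j ≠ i` yields a nonconstant univariate polynomial in `x i`. -/
def PolyDependsOn {n : ℕ} (f : MvPolynomial (Fin n) ℂ) (i : Fin n) : Prop :=
  ∃ a : Fin n → ℂ, (substPoly f a i).natDegree ≠ 0

/-- A justifying assignment for `f`: for every variable that `f` depends on, substituting
`a` at all the other variables yields a nonconstant univariate polynomial. -/
def Justifying {n : ℕ} (f : MvPolynomial (Fin n) ℂ) (a : Fin n → ℂ) : Prop :=
  ∀ i : Fin n, PolyDependsOn f i → (substPoly f a i).natDegree ≠ 0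

/-- `var f`: the set of variables `f` depends on. -/
def varSet {n : ℕ} (f : MvPolynomial (Fin n) ℂ) : Set (Fin n) :=
  {i | PolyDependsOn f i}

/-- `f` is decomposable if `f = g * h` for nonconstant `g, h` depending on
disjoint sets of variables. -/
def Decomposable {n : ℕ} (f : MvPolynomial (Fin n) ℂ) : Prop :=
  ∃ g h : MvPolynomial (Fin n) ℂ,
    (¬ ∃ c : ℂ, g = MvPolynomial.C c) ∧ (¬ ∃ c : ℂ, h = MvPolynomial.C c) ∧
    Disjoint (varSet g) (varSet h) ∧ f = g * h

open MvPolynomial Polynomial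

lemma substPoly_mul {n : ℕ} (g h : MvPolynomial (Fin n) ℂ) (a : Fin n → ℂ) (i : Fin n) :
    substPoly (g * h) a i = substPoly g a i * substPoly h a i := by
  simp [substPoly, MvPolynomial.eval₂_mul]

lemma eval_substPoly {n : ℕ} (f : MvPolynomial (Fin n) ℂ) (a : Fin n → ℂ) (i : Fin n) (t : ℂ) :
    (substPoly f a i).eval t = MvPolynomial.eval (Function.update a i t) f := by
  have := MvPolynomial.eval₂_comp_left (Polynomial.evalRingHom t) (Polynomial.C : ℂ →+* Polynomial ℂ)
    (fun j => if j = i then Polynomial.X else Polynomial.C (a j)) f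
  simp only [substPoly] at *
  rw [show ((Polynomial.evalRingHom t) : Polynomial ℂ → ℂ) = Polynomial.eval t from rfl] at this
  rw [this]
  rw [MvPolynomial.eval, MvPolynomial.eval₂Hom]
  congr 1
  · ext c; simp
  · funext j
    by_cases hj : j = i <;> simp [hj, Function.update_apply]

lemma eval_substPoly_self {n : ℕ} (f : MvPolynomial (Fin n) ℂ) (a : Fin n → ℂ) (i : Fin n) :
    (substPoly f a i).eval (a i) = MvPolynomial.eval a f := by
  rw [eval_substPoly, Function.update_eq_self]

lemma substPoly_eq_C {n : ℕ} (g : MvPolynomial (Fin n) ℂ) (a : Fin n → ℂ) (i : Fin n)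
    (hd : (substPoly g a i).natDegree = 0) :
    substPoly g a i = Polynomial.C (MvPolynomial.eval a g) := by
  obtain ⟨c, hc⟩ := Polynomial.natDegree_eq_zero.mp hd
  have := eval_substPoly_self g a i
  rw [← hc] at this ⊢
  simp at this
  rw [this]

lemma exists_eval_ne_zero {n : ℕ} (p : MvPolynomial (Fin n) ℂ) (hp : p ≠ 0) :
    ∃ b : Fin n → ℂ, MvPolynomial.eval b p ≠ 0 := by
  by_contra hb
  push_neg at hb
  exact hp (MvPolynomial.funext (q := 0) (fun x => by simp [hb x]))

lemma substPoly_eq_map {n : ℕ} (h : MvPolynomial (Fin n) ℂ) (b : Fin n → ℂ) (i : Fin n) :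
    substPoly h b i = Polynomial.map (MvPolynomial.eval b)
      (MvPolynomial.eval₂ (Polynomial.C.comp MvPolynomial.C)
        (fun j => if j = i then Polynomial.X else Polynomial.C (MvPolynomial.X j)) h) := by
  have := MvPolynomial.eval₂_comp_left (Polynomial.mapRingHom (MvPolynomial.eval b))
    (Polynomial.C.comp (MvPolynomial.C : ℂ →+* MvPolynomial (Fin n) ℂ))
    (fun j => if j = i then Polynomial.X else Polynomial.C (MvPolynomial.X j)) h
  simp only [Polynomial.coe_mapRingHom] at this
  rw [this, substPoly]
  congr 1
  · ext c; simp
  · funext j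
    by_cases hj : j = i <;> simp [hj]

lemma exists_dependsOn_of_nonconst {n : ℕ} (h : MvPolynomial (Fin n) ℂ)
    (hh : ¬ ∃ c : ℂ, h = MvPolynomial.C c) : ∃ i, PolyDependsOn h i := by
  by_contra hnd
  push_neg at hnd
  have hdeg : ∀ (i : Fin n) (a : Fin n → ℂ), (substPoly h a i).natDegree = 0 := by
    intro i a
    by_contra hne
    exact hnd i ⟨a, hne⟩
  -- eval is constant along each coordinate
  have hline : ∀ (a : Fin n → ℂ) (i : Fin n) (t : ℂ),
      MvPolynomial.eval (Function.update a i t) h = MvPolynomial.eval a h := by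
    intro a i t
    rw [← eval_substPoly, substPoly_eq_C h a i (hdeg i a)]
    simp
  have key : ∀ (a b : Fin n → ℂ) (s : Finset (Fin n)),
      MvPolynomial.eval (fun j => if j ∈ s then b j else a j) h = MvPolynomial.eval a h := by
    intro a b s
    induction s using Finset.induction with
    | empty => simp
    | @insert i s hi ih =>
      have : (fun j => if j ∈ insert i s then b j else a j) =
          Function.update (fun j => if j ∈ s then b j else a j) i (b i) := by
        funext j
        by_cases hj : j = i <;> simp [hj, Function.update_apply]
      rw [this, hline, ih]
  have hconst : ∀ a b : Fin n → ℂ, MvPolynomial.eval a h = MvPolynomial.eval b h := by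
    intro a b
    have := key b a Finset.univ
    simp at this
    rw [← this]
  exact hh ⟨MvPolynomial.eval 0 h, MvPolynomial.funext (fun x => by simp [hconst x 0])⟩

lemma aux_contra {n : ℕ} (g h : MvPolynomial (Fin n) ℂ) (a : Fin n → ℂ)
    (ja : Justifying (g * h) a) (hg0 : MvPolynomial.eval a g = 0)
    (hg : ¬ ∃ c : ℂ, g = MvPolynomial.C c) (hh : ¬ ∃ c : ℂ, h = MvPolynomial.C c)
    (hd : Disjoint (varSet g) (varSet h)) : False := by
  obtain ⟨i, hdep⟩ := exists_dependsOn_of_nonconst h hh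
  have hgi : ¬ PolyDependsOn g i := fun hdg => Set.disjoint_left.mp hd hdg hdep
  have hgdeg : ∀ b : Fin n → ℂ, (substPoly g b i).natDegree = 0 := by
    intro b
    by_contra hne
    exact hgi ⟨b, hne⟩
  have hga : substPoly g a i = 0 := by
    rw [substPoly_eq_C g a i (hgdeg a), hg0, map_zero]
  have hgne : g ≠ 0 := fun h0 => hg ⟨0, by simp [h0]⟩
  -- f = g*h depends on i
  obtain ⟨b0, hb0⟩ := hdep
  set d := (substPoly h b0 i).natDegree with hdd
  set Φ := MvPolynomial.eval₂ (Polynomial.C.comp MvPolynomial.C)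
      (fun j => if j = i then Polynomial.X else Polynomial.C (MvPolynomial.X j)) h with hΦ
  have hcoeff : ∀ b : Fin n → ℂ, (substPoly h b i).coeff d = MvPolynomial.eval b (Φ.coeff d) := by
    intro b
    rw [substPoly_eq_map h b i, Polynomial.coeff_map]
  have hcd : Φ.coeff d ≠ 0 := by
    intro h0
    have hnz : substPoly h b0 i ≠ 0 := fun h0' => hb0 (by rw [hdd, h0', Polynomial.natDegree_zero])
    have := hcoeff b0
    rw [h0, map_zero] at this
    exact Polynomial.leadingCoeff_ne_zero.mpr hnz this
  obtain ⟨b, hb⟩ := exists_eval_ne_zero (g * Φ.coeff d) (mul_ne_zero hgne hcd)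
  rw [map_mul] at hb
  have hbg : MvPolynomial.eval b g ≠ 0 := fun h0 => hb (by rw [h0, zero_mul])
  have hbc : MvPolynomial.eval b (Φ.coeff d) ≠ 0 := fun h0 => hb (by rw [h0, mul_zero])
  have hhb : (substPoly h b i).natDegree ≠ 0 := by
    intro h0
    have hle : d ≤ (substPoly h b i).natDegree :=
      Polynomial.le_natDegree_of_ne_zero (by rw [hcoeff b]; exact hbc)
    omega
  have hdepf : PolyDependsOn (g * h) i := by
    refine ⟨b, ?_⟩
    rw [substPoly_mul, substPoly_eq_C g b i (hgdeg b), Polynomial.natDegree_C_mul hbg]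
    exact hhb
  have := ja i hdepf
  rw [substPoly_mul, hga, zero_mul] at this
  simp at this

theorem justifying_zero_implies_indecomposable {n : ℕ} (f : MvPolynomial (Fin n) ℂ)
    (h : ∃ a : Fin n → ℂ, Justifying f a ∧ MvPolynomial.eval a f = 0) :
    ¬ Decomposable f := by
  obtain ⟨a, ja, ha0⟩ := h
  rintro ⟨g, h, hg, hh, hd, rfl⟩
  rw [map_mul, mul_eq_zero] at ha0
  rcases ha0 with h0 | h0
  · exact aux_contra g h a ja h0 hg hh hd
  · have ja' : Justifying (h * g) a := by rwa [mul_comm]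
    exact aux_contra h g a ja' h0 hh hg hd.symm
end

section
/- (Entanglement Lemma) Let r ≥ 1 and let S ⊆ Fin r with |S| ≥ 2. Let ψ be any r-qubit state vector and let φ = CZ_S ψ. Then at least one of the following holds: (1) ψ is S-entangled; (2) φ is S-entangled; (3) CZ_S simplifies on ψ. -/
open scoped BigOperators

/-- The state space of `r` qubits: amplitudes indexed by bit strings of length `r`. -/
abbrev QState (r : ℕ) := (Fin r → Bool) → ℂ

/-- A unit vector (state vector): Euclidean norm 1. -/
def UnitVec {r : ℕ} (ψ : QState r) : Prop := ∑ x, ‖ψ x‖ ^ 2 = 1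

/-- The C-SIGN gate on the qubits in `S`: flips the sign of the amplitude exactly
when all bits in `S` are `1`. -/
noncomputable def czGate {r : ℕ} (S : Finset (Fin r)) (ψ : QState r) : QState r :=
  fun x => if ∀ i ∈ S, x i = true then -ψ x else ψ x

/-- `{A, B}` is a bipartition of the qubits. -/
def Bipartition {r : ℕ} (A B : Finset (Fin r)) : Prop :=
  A.Nonempty ∧ B.Nonempty ∧ Disjoint A B ∧ A ∪ B = Finset.univ

/-- `ψ` separates at `{A, B}`: it is a tensor product of a state on the qubits in `A`
and a state on the qubits in `B`. -/
def SeparatesAt {r : ℕ} (ψ : QState r) (A B : Finset (Fin r)) : Prop :=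
  ∃ (ψA : ({i : Fin r // i ∈ A} → Bool) → ℂ) (ψB : ({i : Fin r // i ∈ B} → Bool) → ℂ),
    ∀ x : Fin r → Bool, ψ x = ψA (fun i => x i.1) * ψB (fun i => x i.1)

/-- `ψ` is `S`-separable: it separates at some bipartition both of whose parts
meet `S`. -/
def SSeparable {r : ℕ} (S : Finset (Fin r)) (ψ : QState r) : Prop :=
  ∃ A B : Finset (Fin r),
    Bipartition A B ∧ (A ∩ S).Nonempty ∧ (B ∩ S).Nonempty ∧ SeparatesAt ψ A B

/-- `ψ` is `S`-entangled: not `S`-separable. -/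
def SEntangled {r : ℕ} (S : Finset (Fin r)) (ψ : QState r) : Prop :=
  ¬ SSeparable S ψ

/-- `CZ_S` simplifies on `ψ`: it either disappears on `ψ` or simplifies to `CZ_T`
on `ψ` for some proper subset `T ⊊ S`. -/
noncomputable def SimplifiesOn {r : ℕ} (S : Finset (Fin r)) (ψ : QState r) : Prop :=
  czGate S ψ = ψ ∨ ∃ T : Finset (Fin r), T ⊂ S ∧ czGate S ψ = czGate T ψ ∧ czGate S ψ ≠ ψ

/-!
A state separating at `{A, B}` satisfies the exchange identity
`ψ x * ψ y = ψ (x_A y_B) * ψ (y_A x_B)`, so its support is closed under exchanging `A`-parts.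
If `ψ` separates at `{A, B}` and `CZ_S ψ` at `{A', B'}`, both cutting `S`, then `S` meets two
opposite quadrants, say `A ∩ A'` and `B ∩ B'`. If `CZ_S` does not simplify, the support contains a
point `w₀` that is all ones on `S` and points with a zero in `S ∩ A ∩ A'` resp. `S ∩ B ∩ B'`.
Exchanging parts of these gives support points `V, U` whose exchange partners are the same pair
`Y, w₀` for both bipartitions. `CZ_S` fixes `V, U, Y` and negates `w₀`, so the two exchange
identities give `ψ V * ψ U = -(ψ V * ψ U)`, a contradiction.
-/

section Quadrants

variable {α : Type*} [DecidableEq α] {S A B A' B' : Finset α}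

lemma quadrants_nonempty_of_parts_meet (hAB : S ⊆ A ∪ B) (hA'B' : S ⊆ A' ∪ B')
    (hA : (A ∩ S).Nonempty) (hB : (B ∩ S).Nonempty)
    (hA' : (A' ∩ S).Nonempty) (hB' : (B' ∩ S).Nonempty) :
    ((S ∩ (A ∩ A')).Nonempty ∧ (S ∩ (B ∩ B')).Nonempty) ∨
      ((S ∩ (A ∩ B')).Nonempty ∧ (S ∩ (B ∩ A')).Nonempty) := by
  simp only [Finset.Nonempty, Finset.mem_inter] at *
  grind

end Quadrants

section Separation

variable {r : ℕ} {A B : Finset (Fin r)} {ψ : QState r}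

lemma SeparatesAt.symm (h : SeparatesAt ψ A B) : SeparatesAt ψ B A := by
  obtain ⟨f, g, hfg⟩ := h
  exact ⟨g, f, fun x => by rw [hfg x, mul_comm]⟩

lemma SeparatesAt.mul_eq_mul_piecewise (h : SeparatesAt ψ A B) (hAB : Disjoint A B)
    (x y : Fin r → Bool) :
    ψ x * ψ y = ψ (A.piecewise x y) * ψ (A.piecewise y x) := by
  obtain ⟨f, g, hfg⟩ := h
  have hA (u v : Fin r → Bool) : (fun i : A => A.piecewise u v i.1) = fun i => u i.1 :=
    funext fun i => A.piecewise_eq_of_mem _ _ i.2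
  have hB (u v : Fin r → Bool) : (fun i : B => A.piecewise u v i.1) = fun i => v i.1 :=
    funext fun i => A.piecewise_eq_of_notMem _ _ (Finset.disjoint_right.1 hAB i.2)
  simp only [hfg, hA, hB]
  ring

lemma SeparatesAt.piecewise_ne_zero (h : SeparatesAt ψ A B) (hAB : Disjoint A B)
    {x y : Fin r → Bool} (hx : ψ x ≠ 0) (hy : ψ y ≠ 0) : ψ (A.piecewise x y) ≠ 0 :=
  left_ne_zero_of_mul (h.mul_eq_mul_piecewise hAB x y ▸ mul_ne_zero hx hy)

end Separation

section Gate

variable {r : ℕ} {S : Finset (Fin r)} {ψ : QState r} {x : Fin r → Bool}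

lemma czGate_apply_of_forall (hx : ∀ i ∈ S, x i = true) : czGate S ψ x = -ψ x :=
  if_pos hx

lemma czGate_apply_of_eq_false {i : Fin r} (hi : i ∈ S) (hx : x i = false) :
    czGate S ψ x = ψ x :=
  if_neg fun h => by simp [h i hi] at hx

lemma czGate_eq_zero_iff : czGate S ψ x = 0 ↔ ψ x = 0 := by
  unfold czGate
  split_ifs <;> simp

lemma exists_forall_true_of_czGate_ne (h : czGate S ψ ≠ ψ) :
    ∃ x, ψ x ≠ 0 ∧ ∀ i ∈ S, x i = true := by
  contrapose! h
  funext x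
  by_cases hx : ∀ i ∈ S, x i = true
  · have hψx : ψ x = 0 := not_not.1 fun hψx => (h x hψx).elim fun i hi => hi.2 (hx i hi.1)
    rw [czGate_apply_of_forall hx, hψx, neg_zero]
  · exact if_neg hx

lemma exists_eq_false_of_czGate_ne_sdiff {C : Finset (Fin r)}
    (h : czGate S ψ ≠ czGate (S \ C) ψ) : ∃ x, ψ x ≠ 0 ∧ ∃ i ∈ C, x i = false := by
  contrapose! h
  funext x
  by_cases hψx : ψ x = 0
  · rw [czGate_eq_zero_iff.2 hψx, czGate_eq_zero_iff.2 hψx]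
  have hxC : ∀ i ∈ C, x i = true := fun i hi => by simpa using h x hψx i hi
  have hiff : (∀ i ∈ S, x i = true) ↔ ∀ i ∈ S \ C, x i = true :=
    ⟨fun hS i hi => hS i (Finset.mem_sdiff.1 hi).1, fun hSC i hi =>
      if hiC : i ∈ C then hxC i hiC else hSC i (Finset.mem_sdiff.2 ⟨hi, hiC⟩)⟩
  simp only [czGate, hiff]

end Gate

section Entanglement

variable {r : ℕ} {S A B A' B' : Finset (Fin r)} {ψ : QState r}

lemma false_of_separatesAt_of_support (hψ : SeparatesAt ψ A B) (hAB : Disjoint A B)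
    (hφ : SeparatesAt (czGate S ψ) A' B') (hA'B' : Disjoint A' B')
    {w₀ wa wb : Fin r → Bool} (h₀ : ψ w₀ ≠ 0) (h₀S : ∀ i ∈ S, w₀ i = true)
    (ha : ψ wa ≠ 0) {ia : Fin r} (hia : ia ∈ S) (hiaA : ia ∈ A) (hiaA' : ia ∈ A')
    (hwa : wa ia = false)
    (hb : ψ wb ≠ 0) {ib : Fin r} (hib : ib ∈ S) (hibA : ib ∉ A) (hibA' : ib ∉ A')
    (hwb : wb ib = false) : False := by
  have hsupp {x : Fin r → Bool} : czGate S ψ x ≠ 0 ↔ ψ x ≠ 0 := czGate_eq_zero_iff.not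
  set V := A'.piecewise (A.piecewise wa w₀) w₀
  set U := A'.piecewise w₀ (A.piecewise w₀ wb)
  set Y := A.piecewise V U
  have hV : ψ V ≠ 0 := hsupp.1 <| hφ.piecewise_ne_zero hA'B'
    (hsupp.2 (hψ.piecewise_ne_zero hAB ha h₀)) (hsupp.2 h₀)
  have hU : ψ U ≠ 0 := hsupp.1 <| hφ.piecewise_ne_zero hA'B'
    (hsupp.2 h₀) (hsupp.2 (hψ.piecewise_ne_zero hAB h₀ hb))
  have hψVU : ψ V * ψ U = ψ Y * ψ w₀ := by
    rw [hψ.mul_eq_mul_piecewise hAB V U]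
    congr 2
    ext i
    simp only [U, V, Finset.piecewise]
    split_ifs <;> rfl
  have hφVU : czGate S ψ V * czGate S ψ U = czGate S ψ Y * czGate S ψ w₀ := by
    rw [hφ.mul_eq_mul_piecewise hA'B' V U]
    congr 2 <;> ext i <;> simp only [Y, U, V, Finset.piecewise] <;> split_ifs <;> rfl
  have hVa : V ia = false := by simp [V, hiaA, hiaA', hwa]
  have hUb : U ib = false := by simp [U, hibA, hibA', hwb]
  have hYa : Y ia = false := by simp [Y, hiaA, hVa]
  rw [czGate_apply_of_eq_false hia hVa, czGate_apply_of_eq_false hib hUb,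
    czGate_apply_of_eq_false hia hYa, czGate_apply_of_forall h₀S] at hφVU
  exact mul_ne_zero hV hU (by linear_combination (hψVU + hφVU) / 2)

lemma not_separatesAt_czGate (hS : ¬ SimplifiesOn S ψ)
    (hψ : SeparatesAt ψ A B) (hAB : Disjoint A B) (hA'B' : Disjoint A' B')
    (hAA' : (S ∩ (A ∩ A')).Nonempty) (hBB' : (S ∩ (B ∩ B')).Nonempty) :
    ¬ SeparatesAt (czGate S ψ) A' B' := by
  intro hφ
  obtain ⟨hne, hT⟩ := not_or.1 hS
  have witness (C : Finset (Fin r)) (hCS : C ⊆ S) (hC : C.Nonempty) :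
      ∃ x, ψ x ≠ 0 ∧ ∃ i ∈ C, x i = false :=
    exists_eq_false_of_czGate_ne_sdiff fun heq =>
      hT ⟨S \ C, Finset.sdiff_ssubset hCS hC, heq, hne⟩
  obtain ⟨w₀, h₀, h₀S⟩ := exists_forall_true_of_czGate_ne hne
  obtain ⟨wa, ha, ia, hia, hwa⟩ := witness _ Finset.inter_subset_left hAA'
  obtain ⟨wb, hb, ib, hib, hwb⟩ := witness _ Finset.inter_subset_left hBB'
  simp only [Finset.mem_inter] at hia hib
  exact false_of_separatesAt_of_support hψ hAB hφ hA'B' h₀ h₀S ha hia.1 hia.2.1 hia.2.2 hwa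
    hb hib.1 (Finset.disjoint_right.1 hAB hib.2.1) (Finset.disjoint_right.1 hA'B' hib.2.2) hwb

end Entanglement

theorem entanglement_lemma_general (r : ℕ) (S : Finset (Fin r))
    (ψ : QState r) :
    SEntangled S ψ ∨ SEntangled S (czGate S ψ) ∨ SimplifiesOn S ψ := by
  refine or_iff_not_imp_left.2 fun hψ => or_iff_not_imp_left.2 fun hφ => ?_
  by_contra hS
  obtain ⟨A, B, ⟨-, -, hAB, hABu⟩, hAS, hBS, hsepψ⟩ := not_not.1 hψ
  obtain ⟨A', B', ⟨-, -, hA'B', hA'B'u⟩, hA'S, hB'S, hsepφ⟩ := not_not.1 hφ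
  rcases quadrants_nonempty_of_parts_meet (hABu ▸ Finset.subset_univ S)
      (hA'B'u ▸ Finset.subset_univ S) hAS hBS hA'S hB'S with ⟨hAA', hBB'⟩ | ⟨hAB', hBA'⟩
  · exact not_separatesAt_czGate hS hsepψ hAB hA'B' hAA' hBB' hsepφ
  · exact not_separatesAt_czGate hS hsepψ hAB hA'B'.symm hAB' hBA' hsepφ.symm

theorem entanglement_lemma (r : ℕ) (hr : 1 ≤ r) (S : Finset (Fin r)) (hS : 2 ≤ S.card)
    (ψ : QState r) (hψ : UnitVec ψ) :
    SEntangled S ψ ∨ SEntangled S (czGate S ψ) ∨ SimplifiesOn S ψ :=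
  entanglement_lemma_general r S ψ
end

section
/- Let r ≥ 1, S ⊆ Fin r, and let {A,B} be a bipartition of Fin r. Suppose CZ_S disappears on ψ_A ⊗ ψ_B for some states ψ_A of the qubits in A and ψ_B of the qubits in B. Then either CZ_S disappears on ψ_A ⊗ φ_B for every state φ_B of the qubits in B, or CZ_S disappears on φ_A ⊗ ψ_B for every state φ_A of the qubits in A. -/
open scoped BigOperators

/-- A unit vector on qubits indexed by a finite type. -/
def UnitVecOn {α : Type*} [Fintype α] [DecidableEq α] (ψ : (α → Bool) → ℂ) : Prop :=
  ∑ x, ‖ψ x‖ ^ 2 = 1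

/-- The tensor product of a state on the qubits in `A` with a state on the qubits
in `B` (for `{A,B}` a bipartition of the register). -/
noncomputable def tens {r : ℕ} (A B : Finset (Fin r))
    (ψA : ({i : Fin r // i ∈ A} → Bool) → ℂ) (ψB : ({i : Fin r // i ∈ B} → Bool) → ℂ) :
    QState r :=
  fun x => ψA (fun i => x i.1) * ψB (fun i => x i.1)

/-
The gate fixes a state exactly when the state vanishes on every bit string that is all ones on
`S`. For a product state the amplitude at `x` is `ψA (x|_A) · ψB (x|_B)`, and since `A` and `B`
are disjoint any two local strings that are all ones on `S` glue to a global one. So if both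
factors had a nonzero amplitude at such a local string, the product would have a nonzero
amplitude at the glued string; hence one factor vanishes on all of them, and then every product
with that factor is fixed by the gate.
-/

open Finset

variable {r : ℕ} (S : Finset (Fin r))

theorem czGate_eq_self_iff (ψ : QState r) :
    czGate S ψ = ψ ↔ ∀ x, (∀ i ∈ S, x i = true) → ψ x = 0 := by
  constructor
  · intro h x hx
    have hx' := congrFun h x
    simp only [czGate, if_pos hx] at hx'
    exact CharZero.neg_eq_self_iff.mp hx'
  · intro h
    funext x
    by_cases hx : ∀ i ∈ S, x i = true
    · simp [czGate, h x hx]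
    · simp [czGate, hx]

def VanishesOnAllOnes {A : Finset (Fin r)} (ψ : ({i : Fin r // i ∈ A} → Bool) → ℂ) : Prop :=
  ∀ a : {i : Fin r // i ∈ A} → Bool, (∀ i, i.1 ∈ S → a i = true) → ψ a = 0

variable {S} {A B : Finset (Fin r)}

theorem czGate_tens_eq_self_of_left {ψA : ({i : Fin r // i ∈ A} → Bool) → ℂ}
    (hψA : VanishesOnAllOnes S ψA) (φB : ({i : Fin r // i ∈ B} → Bool) → ℂ) :
    czGate S (tens A B ψA φB) = tens A B ψA φB := by
  rw [czGate_eq_self_iff]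
  intro x hx
  simp [tens, hψA _ fun i hi => hx i.1 hi]

theorem czGate_tens_eq_self_of_right {ψB : ({i : Fin r // i ∈ B} → Bool) → ℂ}
    (hψB : VanishesOnAllOnes S ψB) (φA : ({i : Fin r // i ∈ A} → Bool) → ℂ) :
    czGate S (tens A B φA ψB) = tens A B φA ψB := by
  rw [czGate_eq_self_iff]
  intro x hx
  simp [tens, hψB _ fun i hi => hx i.1 hi]

theorem exists_allOnes_restrict_eq (hAB : Disjoint A B)
    {a : {i : Fin r // i ∈ A} → Bool} (ha : ∀ i, i.1 ∈ S → a i = true)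
    {b : {i : Fin r // i ∈ B} → Bool} (hb : ∀ i, i.1 ∈ S → b i = true) :
    ∃ x : Fin r → Bool, (∀ i ∈ S, x i = true) ∧
      (fun i : {i : Fin r // i ∈ A} => x i.1) = a ∧ (fun i : {i : Fin r // i ∈ B} => x i.1) = b := by
  refine ⟨fun i => if hA : i ∈ A then a ⟨i, hA⟩ else if hB : i ∈ B then b ⟨i, hB⟩ else true,
    fun i hi => ?_, funext fun i => by simp [i.2], funext fun i => ?_⟩
  · dsimp only
    split_ifs with hA hB
    exacts [ha _ hi, hb _ hi, rfl]
  · simp [disjoint_right.mp hAB i.2, i.2]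

theorem VanishesOnAllOnes.left_or_right (hAB : Disjoint A B)
    {ψA : ({i : Fin r // i ∈ A} → Bool) → ℂ} {ψB : ({i : Fin r // i ∈ B} → Bool) → ℂ}
    (h : czGate S (tens A B ψA ψB) = tens A B ψA ψB) :
    VanishesOnAllOnes S ψA ∨ VanishesOnAllOnes S ψB := by
  unfold VanishesOnAllOnes
  by_contra! ⟨⟨a, ha, hψa⟩, b, hb, hψb⟩
  obtain ⟨x, hx, rfl, rfl⟩ := exists_allOnes_restrict_eq hAB ha hb
  exact mul_ne_zero hψa hψb ((czGate_eq_self_iff S _).mp h x hx)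

theorem cz_disappears_one_side_general (r : ℕ) (S : Finset (Fin r))
    (A B : Finset (Fin r)) (hAB : Bipartition A B)
    (ψA : ({i : Fin r // i ∈ A} → Bool) → ℂ)
    (ψB : ({i : Fin r // i ∈ B} → Bool) → ℂ)
    (h : czGate S (tens A B ψA ψB) = tens A B ψA ψB) :
    (∀ φB : ({i : Fin r // i ∈ B} → Bool) → ℂ, UnitVecOn φB →
        czGate S (tens A B ψA φB) = tens A B ψA φB) ∨
    (∀ φA : ({i : Fin r // i ∈ A} → Bool) → ℂ, UnitVecOn φA →
        czGate S (tens A B φA ψB) = tens A B φA ψB) := by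
  obtain ⟨-, -, hdisj, -⟩ := hAB
  rcases VanishesOnAllOnes.left_or_right hdisj h with hψA | hψB
  · exact Or.inl fun φB _ => czGate_tens_eq_self_of_left hψA φB
  · exact Or.inr fun φA _ => czGate_tens_eq_self_of_right hψB φA

theorem cz_disappears_one_side (r : ℕ) (hr : 1 ≤ r) (S : Finset (Fin r))
    (A B : Finset (Fin r)) (hAB : Bipartition A B)
    (ψA : ({i : Fin r // i ∈ A} → Bool) → ℂ) (hψA : UnitVecOn ψA)
    (ψB : ({i : Fin r // i ∈ B} → Bool) → ℂ) (hψB : UnitVecOn ψB)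
    (h : czGate S (tens A B ψA ψB) = tens A B ψA ψB) :
    (∀ φB : ({i : Fin r // i ∈ B} → Bool) → ℂ, UnitVecOn φB →
        czGate S (tens A B ψA φB) = tens A B ψA φB) ∨
    (∀ φA : ({i : Fin r // i ∈ A} → Bool) → ℂ, UnitVecOn φA →
        czGate S (tens A B φA ψB) = tens A B φA ψB) :=
  cz_disappears_one_side_general r S A B hAB ψA ψB h
end
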